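/- Suppose for every triple (r', α', κ') in a set C ⊆ ℝ³_{≥0} and every β with 0 ≤ β < r', the triple (r' - β, α' + β, κ' + 2β) also lies in the closure of C. If C contains all (r',α',κ') with r' + α' ≤ A, α' ≤ min(L, B), α' ≤ κ' (for constants A, B, L ≥ 0), then the closure of C contains all (r,α,κ) with r + α ≤ A, 2α - κ ≤ L, 2α - κ ≤ B, and α ≤ κ. -/
import Mathlib


/-- Combining the base region (Theorem 1) with the key-trading operation
(Theorem 2) yields the inner bound region of Theorem 3 inside the closure. -/
theorem stmt9 (A B L : ℝ) (hA : 0 ≤ A) (hB : 0 ≤ B) (hL : 0 ≤ L)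
    (C : Set (ℝ × ℝ × ℝ))
    (hC0 : ∀ p ∈ C, 0 ≤ p.1 ∧ 0 ≤ p.2.1 ∧ 0 ≤ p.2.2)
    (htrade : ∀ p ∈ C, ∀ β : ℝ, 0 ≤ β → β < p.1 →
      (p.1 - β, p.2.1 + β, p.2.2 + 2 * β) ∈ closure C)
    (hbase : ∀ r' α' κ' : ℝ, 0 ≤ r' → 0 ≤ α' → 0 ≤ κ' →
      r' + α' ≤ A → α' ≤ min L B → α' ≤ κ' → (r', α', κ') ∈ C) :
    ∀ r α κ : ℝ, 0 ≤ r → 0 ≤ α → 0 ≤ κ →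
      r + α ≤ A → 2 * α - κ ≤ L → 2 * α - κ ≤ B → α ≤ κ →
      (r, α, κ) ∈ closure C := by
  intro r α κ hr hα hκ h1 h2 h3 h4
  set β : ℝ := max (α - min L B) 0 with hβdef
  have hβ0 : 0 ≤ β := le_max_right _ _
  have hmin : 0 ≤ min L B := le_min hL hB
  have hα' : 0 ≤ α - β := by
    rcases max_cases (α - min L B) 0 with ⟨h, _⟩ | ⟨h, _⟩ <;> rw [hβdef, h] <;> linarith
  have hαmin : α - β ≤ min L B := by
    rcases max_cases (α - min L B) 0 with ⟨h, h'⟩ | ⟨h, h'⟩ <;> rw [hβdef, h] <;> linarith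
  have hβκ : β ≤ κ - α := by
    have : α - min L B ≤ κ - α := by
      have := min_cases L B
      rcases this with ⟨h, _⟩ | ⟨h, _⟩ <;> rw [h] <;> linarith
    exact max_le this (by linarith)
  have hκ' : α - β ≤ κ - 2 * β := by linarith
  have hbase' : (r + β, α - β, κ - 2 * β) ∈ C :=
    hbase _ _ _ (by linarith) hα' (by linarith) (by linarith) hαmin hκ'
  by_cases hβz : β = 0
  · have : (r, α, κ) ∈ C := by
      rw [hβz] at hbase'; simpa using hbase'
    exact subset_closure this
  · have hβpos : 0 < β := lt_of_le_of_ne hβ0 (Ne.symm hβz)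
    by_cases hrz : r = 0
    · -- limit argument: points (ε, α - ε, κ - 2ε) ∈ closure C as ε → 0
      subst hrz
      have key : ∀ n : ℕ, (β / (n + 2), α - β / (n + 2), κ - 2 * (β / (n + 2))) ∈ closure C := by
        intro n
        have hn2 : (0:ℝ) < (n:ℝ) + 2 := by positivity
        have hε : 0 < β / (n + 2) := div_pos hβpos hn2
        have hεβ : β / (n + 2) < β := by
          rw [div_lt_iff₀ hn2]
          nlinarith
        have := htrade _ hbase' (β - β / (n + 2)) (by linarith) (by simp; linarith)
        simpa using (by convert this using 2 <;> ring)
      have htend : Filter.Tendsto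
          (fun n : ℕ => ((β / (n + 2), α - β / (n + 2), κ - 2 * (β / (n + 2))) : ℝ × ℝ × ℝ))
          Filter.atTop (nhds ((0:ℝ), α, κ)) := by
        have h0 : Filter.Tendsto (fun n : ℕ => β / ((n:ℝ) + 2)) Filter.atTop (nhds 0) := by
          apply Filter.Tendsto.div_atTop tendsto_const_nhds
          exact Filter.tendsto_atTop_add_const_right _ 2 tendsto_natCast_atTop_atTop
        refine Filter.Tendsto.prodMk_nhds h0 (Filter.Tendsto.prodMk_nhds ?_ ?_)
        · simpa using (tendsto_const_nhds.sub h0)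
        · have := tendsto_const_nhds (α := ℕ) (f := Filter.atTop) (x := κ) |>.sub
            (h0.const_mul 2)
          simpa using this
      exact isClosed_closure.mem_of_tendsto htend (Filter.Eventually.of_forall key)
    · have hrpos : 0 < r := lt_of_le_of_ne hr (Ne.symm hrz)
      have := htrade _ hbase' β hβ0 (by simp; linarith)
      simpa using (by convert this using 2 <;> ring)
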